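/- arXiv:1808.09720 — 4 statements merged into one kernel-verified Lean document; each statement's English description precedes it below -/
import Mathlib

section
/- Under Assumptions 1-3 (see context), the numerical integration error of the quadrature rule satisfies $|\mathbb{E}[y(\xi)] - \mathbb{I}[y(\xi)]| \le L\epsilon + W\delta$, where $\mathbb{I}[y] = \sum_{k=1}^M y(\xi_k) w_k$. -/
/-!
Since `Ψ₀ ≡ 1`, the mean of `y` is its zeroth coefficient, which is also the mean of its projection
`y_p`. Hence `E[y] - I[y] = (E[y_p] - I[y_p]) + I[y_p - y]`. The first term is
`∑ c_j (E[Ψ_j] - I[Ψ_j])`, bounded by `L ε` because Cauchy–Schwarz gives `|c_j| ≤ ‖y‖₂ ≤ L`;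
the second is at most `W ‖y - y_p‖₁ ≤ W ‖y - y_p‖₂ ≤ W δ`.
-/

open MeasureTheory

section CauchySchwarz

variable {α : Type*} [MeasurableSpace α] {μ : Measure α} {f g : α → ℝ}

theorem abs_integral_mul_le_sqrt_mul_sqrt (hf : MemLp f 2 μ) (hg : MemLp g 2 μ) :
    |∫ x, f x * g x ∂μ| ≤ √(∫ x, f x ^ 2 ∂μ) * √(∫ x, g x ^ 2 ∂μ) := by
  have hf' : MemLp f (ENNReal.ofReal 2) μ := by simpa using hf
  have hg' : MemLp g (ENNReal.ofReal 2) μ := by simpa using hg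
  have holder := integral_mul_norm_le_Lp_mul_Lq Real.HolderConjugate.two_two hf' hg'
  simp only [Real.norm_eq_abs, Real.rpow_two, sq_abs, ← Real.sqrt_eq_rpow] at holder
  calc |∫ x, f x * g x ∂μ| ≤ ∫ x, |f x * g x| ∂μ := abs_integral_le_integral_abs
    _ = ∫ x, |f x| * |g x| ∂μ := by simp only [abs_mul]
    _ ≤ _ := holder

theorem integral_abs_le_sqrt_integral_sq [IsProbabilityMeasure μ] (hf : MemLp f 2 μ) :
    ∫ x, |f x| ∂μ ≤ √(∫ x, f x ^ 2 ∂μ) := by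
  have h := abs_integral_mul_le_sqrt_mul_sqrt hf.abs (memLp_const (1 : ℝ))
  simp only [Pi.abs_apply, sq_abs, mul_one, one_pow, integral_const, probReal_univ, smul_eq_mul,
    Real.sqrt_one] at h
  exact (le_abs_self _).trans h

theorem abs_integral_mul_le_sqrt_of_integral_sq_eq_one (hf : MemLp f 2 μ) (hg : MemLp g 2 μ)
    (hg_norm : ∫ x, g x ^ 2 ∂μ = 1) : |∫ x, f x * g x ∂μ| ≤ √(∫ x, f x ^ 2 ∂μ) := by
  simpa [hg_norm] using abs_integral_mul_le_sqrt_mul_sqrt hf hg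

end CauchySchwarz

theorem abs_sum_mul_le_mul_sum_abs {ι : Type*} [Fintype ι] {c r : ι → ℝ} {L : ℝ}
    (hc : ∀ j, |c j| ≤ L) : |∑ j, c j * r j| ≤ L * ∑ j, |r j| := by
  rw [Finset.mul_sum]
  refine (Finset.abs_sum_le_sum_abs _ _).trans (Finset.sum_le_sum fun j _ => ?_)
  rw [abs_mul]
  exact mul_le_mul_of_nonneg_right (hc j) (abs_nonneg _)

theorem Fintype.sum_comp_le_sum_of_nonneg {ι κ N : Type*} [Fintype ι] [Fintype κ]
    [AddCommMonoid N] [Preorder N] [AddLeftMono N] (e : ι ↪ κ) {f : κ → N} (hf : ∀ j, 0 ≤ f j) :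
    ∑ i, f (e i) ≤ ∑ j, f j := by
  rw [← Finset.sum_map]
  exact Finset.sum_le_univ_sum_of_nonneg hf

theorem integral_sub_quadrature_sum_mul {Ω ι : Type*} [MeasurableSpace Ω] [Fintype ι]
    {μ : Measure Ω} {M : ℕ} (ξ : Fin M → Ω) (w : Fin M → ℝ) (a : ι → ℝ) {Ψ : ι → Ω → ℝ}
    (hΨ : ∀ j, Integrable (Ψ j) μ) :
    (∫ x, ∑ j, a j * Ψ j x ∂μ) - ∑ k, w k * ∑ j, a j * Ψ j (ξ k)
      = ∑ j, a j * ((∫ x, Ψ j x ∂μ) - ∑ k, w k * Ψ j (ξ k)) := by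
  rw [integral_finsetSum _ fun j _ => (hΨ j).const_mul _]
  simp only [integral_const_mul, Finset.mul_sum, mul_sub, Finset.sum_sub_distrib]
  rw [Finset.sum_comm]
  simp only [mul_left_comm]

theorem integral_sum_mul_eq_of_orthonormal {Ω ι : Type*} [MeasurableSpace Ω] [Fintype ι]
    [DecidableEq ι] {μ : Measure Ω} {Ψ : ι → Ω → ℝ} {i₀ : ι} (hΨ₀ : Ψ i₀ = fun _ => 1)
    (horth : ∀ i j, ∫ x, Ψ i x * Ψ j x ∂μ = if i = j then 1 else 0)
    (hΨ : ∀ j, Integrable (Ψ j) μ) (a : ι → ℝ) :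
    ∫ x, ∑ j, a j * Ψ j x ∂μ = a i₀ := by
  have hmean : ∀ j, ∫ x, Ψ j x ∂μ = if j = i₀ then 1 else 0 := fun j => by
    simpa [hΨ₀] using horth j i₀
  rw [integral_finsetSum _ fun j _ => (hΨ j).const_mul _]
  simp [integral_const_mul, hmean]

theorem stmt_4_general {Ω : Type*} [MeasurableSpace Ω] (μ : Measure Ω) [IsProbabilityMeasure μ]
    (n₁ n₂ : ℕ) (hn : n₁ ≤ n₂) (hn₁ : 0 < n₁)
    (Ψ : Fin n₂ → Ω → ℝ)
    (hΨ1 : Ψ ⟨0, lt_of_lt_of_le hn₁ hn⟩ = fun _ => 1)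
    (horth : ∀ i j, ∫ x, Ψ i x * Ψ j x ∂μ = if i = j then (1 : ℝ) else 0)
    (hΨ2 : ∀ i j, Integrable (fun x => Ψ i x * Ψ j x) μ)
    (y : Ω → ℝ) (L δ ε W : ℝ)
    (hy2 : Integrable (fun x => (y x) ^ 2) μ)
    (hyΨ : ∀ j, Integrable (fun x => y x * Ψ j x) μ)
    (hL : Real.sqrt (∫ x, (y x) ^ 2 ∂μ) ≤ L)
    (c : Fin n₂ → ℝ) (hc : ∀ j, c j = ∫ x, y x * Ψ j x ∂μ)
    (yp : Ω → ℝ)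
    (hyp : yp = fun x => ∑ j : Fin n₁, c (Fin.castLE hn j) * Ψ (Fin.castLE hn j) x)
    (hδ : Real.sqrt (∫ x, (y x - yp x) ^ 2 ∂μ) ≤ δ)
    (hdiff2 : Integrable (fun x => (y x - yp x) ^ 2) μ)
    (M : ℕ) (ξ : Fin M → Ω) (w : Fin M → ℝ)
    (hW : ∀ f : Ω → ℝ, Integrable f μ →
      |∑ k, w k * f (ξ k)| ≤ W * ∫ x, |f x| ∂μ)
    (hε : ∑ j : Fin n₂, |(∑ k, w k * Ψ j (ξ k)) - ∫ x, Ψ j x ∂μ| ≤ ε) :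
    |(∫ x, y x ∂μ) - ∑ k, w k * y (ξ k)| ≤ L * ε + W * δ := by
  set i₀ : Fin n₂ := ⟨0, lt_of_lt_of_le hn₁ hn⟩
  have hΨ_int : ∀ j, Integrable (Ψ j) μ := fun j => by simpa [hΨ1] using hΨ2 j i₀
  have hy_int : Integrable y μ := by simpa [hΨ1] using hyΨ i₀
  have hyp_int : Integrable yp μ :=
    hyp ▸ integrable_finsetSum _ fun j _ => (hΨ_int _).const_mul _
  have hmean : ∫ x, y x ∂μ = ∫ x, yp x ∂μ := by
    simp only [hyp]
    rw [integral_sum_mul_eq_of_orthonormal (Ψ := fun j => Ψ (Fin.castLE hn j)) (i₀ := ⟨0, hn₁⟩)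
      hΨ1 (fun i j => by simpa using horth (Fin.castLE hn i) (Fin.castLE hn j))
      (fun j => hΨ_int _), hc]
    simp [i₀, hΨ1]
  have hc_le : ∀ j, |c j| ≤ L := fun j => by
    have hΨ_sq : Integrable (fun x => Ψ j x ^ 2) μ := by simpa [sq] using hΨ2 j j
    refine hc j ▸ (abs_integral_mul_le_sqrt_of_integral_sq_eq_one
      ((memLp_two_iff_integrable_sq hy_int.aestronglyMeasurable).2 hy2)
      ((memLp_two_iff_integrable_sq (hΨ_int j).aestronglyMeasurable).2 hΨ_sq)
      (by simpa [sq] using horth j j)).trans hL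
  have hW_nonneg : 0 ≤ W := by
    simpa using (abs_nonneg _).trans (hW (fun _ => 1) (integrable_const 1))
  have hprojection : |(∫ x, yp x ∂μ) - ∑ k, w k * yp (ξ k)| ≤ L * ε := by
    rw [hyp, integral_sub_quadrature_sum_mul ξ w _ fun j => hΨ_int _]
    refine (abs_sum_mul_le_mul_sum_abs fun j => hc_le _).trans
      (mul_le_mul_of_nonneg_left ?_ ((abs_nonneg _).trans (hc_le i₀)))
    refine le_trans ?_ hε
    simp only [abs_sub_comm (∫ x, _ ∂μ)]
    exact Fintype.sum_comp_le_sum_of_nonneg (Fin.castLEEmb hn)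
      (f := fun j => |(∑ k, w k * Ψ j (ξ k)) - ∫ x, Ψ j x ∂μ|) fun j => abs_nonneg _
  have hresidual : |∑ k, w k * (y (ξ k) - yp (ξ k))| ≤ W * δ := by
    refine (hW _ (hy_int.sub hyp_int)).trans (mul_le_mul_of_nonneg_left ?_ hW_nonneg)
    exact (integral_abs_le_sqrt_integral_sq ((memLp_two_iff_integrable_sq
      (hy_int.sub hyp_int).aestronglyMeasurable).2 hdiff2)).trans hδ
  calc |(∫ x, y x ∂μ) - ∑ k, w k * y (ξ k)|
      = |((∫ x, yp x ∂μ) - ∑ k, w k * yp (ξ k)) - ∑ k, w k * (y (ξ k) - yp (ξ k))| := by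
        simp only [hmean, mul_sub, Finset.sum_sub_distrib]; ring_nf
    _ ≤ L * ε + W * δ := (abs_sub _ _).trans (add_le_add hprojection hresidual)

/-- Integration error bound: under Assumptions 1–3,
`|E[y] - I[y]| ≤ L ε + W δ`. -/
theorem stmt_4 {Ω : Type*} [MeasurableSpace Ω] (μ : Measure Ω) [IsProbabilityMeasure μ]
    (n₁ n₂ : ℕ) (hn : n₁ ≤ n₂) (hn₁ : 0 < n₁)
    (Ψ : Fin n₂ → Ω → ℝ)
    (hΨ1 : Ψ ⟨0, lt_of_lt_of_le hn₁ hn⟩ = fun _ => 1)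
    (horth : ∀ i j, ∫ x, Ψ i x * Ψ j x ∂μ = if i = j then (1 : ℝ) else 0)
    (hΨint : ∀ j, Integrable (Ψ j) μ)
    (hΨ2 : ∀ i j, Integrable (fun x => Ψ i x * Ψ j x) μ)
    (y : Ω → ℝ) (L δ ε W : ℝ)
    (hymeas : AEStronglyMeasurable y μ)
    (hy2 : Integrable (fun x => (y x) ^ 2) μ)
    (hyΨ : ∀ j, Integrable (fun x => y x * Ψ j x) μ)
    (hL : Real.sqrt (∫ x, (y x) ^ 2 ∂μ) ≤ L)
    (c : Fin n₂ → ℝ) (hc : ∀ j, c j = ∫ x, y x * Ψ j x ∂μ)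
    (yp : Ω → ℝ)
    (hyp : yp = fun x => ∑ j : Fin n₁, c (Fin.castLE hn j) * Ψ (Fin.castLE hn j) x)
    (hδ : Real.sqrt (∫ x, (y x - yp x) ^ 2 ∂μ) ≤ δ)
    (hdiff2 : Integrable (fun x => (y x - yp x) ^ 2) μ)
    (M : ℕ) (ξ : Fin M → Ω) (w : Fin M → ℝ)
    (hW : ∀ f : Ω → ℝ, Integrable f μ →
      |∑ k, w k * f (ξ k)| ≤ W * ∫ x, |f x| ∂μ)
    (hε : ∑ j : Fin n₂, |(∑ k, w k * Ψ j (ξ k)) - ∫ x, Ψ j x ∂μ| ≤ ε) :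
    |(∫ x, y x ∂μ) - ∑ k, w k * y (ξ k)| ≤ L * ε + W * δ :=
  stmt_4_general μ n₁ n₂ hn hn₁ Ψ hΨ1 horth hΨ2 y L δ ε W hy2 hyΨ hL c hc yp hyp hδ hdiff2 M ξ w hW
    hε
end

section
/- Under Assumptions 1-3, the stochastic collocation approximation $\tilde{y}(\xi) = \sum_{j=1}^{N_p} \tilde{c}_j \Psi_j(\xi)$ with $\tilde{c}_j = \mathbb{I}[y\,\Psi_j]$ satisfies the error bound $\|y - \tilde{y}\|_2 \le \delta + N_p(LT\epsilon + W\delta)$, where $T = \max_{j,l \le N_{2p}} \|\Psi_j \Psi_l\|_2$. -/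
/-!
Write `y - ỹ = (y - y_p) + (y_p - ỹ)`. The second summand is the expansion `∑ⱼ (c_j - c̃_j) Ψ_j`
in an orthonormal family, so its `L²` norm is at most `∑ⱼ |c_j - c̃_j|`. Since `∫ y_p Ψ_j = c_j`,
each coefficient error `𝕀[y Ψ_j] - ∫ y Ψ_j` is `𝕀[(y - y_p) Ψ_j]`, of size at most `W δ` by
Cauchy–Schwarz, plus the quadrature error of `y_p Ψ_j`. The latter lies in the span of the
`Ψ_m`, with coefficients `∫ y_p Ψ_j Ψ_m` bounded by `‖y_p‖₂ T ≤ L T` (Cauchy–Schwarz and Bessel),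
so its quadrature error is at most `L T ε`.
-/

open MeasureTheory

namespace MeasureTheory

variable {Ω : Type*} [MeasurableSpace Ω] {μ : Measure Ω} {f g h : Ω → ℝ}

theorem MemLp.integral_mul_eq_inner (hf : MemLp f 2 μ) (hg : MemLp g 2 μ) :
    ∫ x, f x * g x ∂μ = inner ℝ (hf.toLp f) (hg.toLp g) := by
  rw [L2.inner_def]
  refine integral_congr_ae ?_
  filter_upwards [hf.coeFn_toLp, hg.coeFn_toLp] with x hfx hgx
  simp [hfx, hgx, mul_comm]

theorem MemLp.sqrt_integral_sq_eq_norm (hf : MemLp f 2 μ) :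
    √(∫ x, f x ^ 2 ∂μ) = ‖hf.toLp f‖ := by
  simp only [norm_eq_sqrt_real_inner, ← hf.integral_mul_eq_inner hf, sq]

theorem abs_integral_mul_le (hf : MemLp f 2 μ) (hg : MemLp g 2 μ) :
    |∫ x, f x * g x ∂μ| ≤ √(∫ x, f x ^ 2 ∂μ) * √(∫ x, g x ^ 2 ∂μ) := by
  rw [hf.integral_mul_eq_inner hg, hf.sqrt_integral_sq_eq_norm, hg.sqrt_integral_sq_eq_norm]
  exact abs_real_inner_le_norm _ _

theorem integral_abs_mul_le (hf : MemLp f 2 μ) (hg : MemLp g 2 μ) :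
    ∫ x, |f x * g x| ∂μ ≤ √(∫ x, f x ^ 2 ∂μ) * √(∫ x, g x ^ 2 ∂μ) := by
  have h := abs_integral_mul_le hf.abs hg.abs
  simp only [Pi.abs_apply, sq_abs, ← abs_mul] at h
  exact (le_abs_self _).trans h

theorem sqrt_integral_sq_sub_le (hf : MemLp f 2 μ) (hg : MemLp g 2 μ) (hh : MemLp h 2 μ) :
    √(∫ x, (f x - h x) ^ 2 ∂μ) ≤ √(∫ x, (f x - g x) ^ 2 ∂μ) + √(∫ x, (g x - h x) ^ 2 ∂μ) := by
  have := norm_sub_le_norm_sub_add_norm_sub (hf.toLp f) (hg.toLp g) (hh.toLp h)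
  simpa only [← MemLp.toLp_sub, ← MemLp.sqrt_integral_sq_eq_norm, Pi.sub_apply] using this

end MeasureTheory

section Orthonormal

variable {Ω ι : Type*} [MeasurableSpace Ω] {μ : Measure Ω} {Ψ : ι → Ω → ℝ}

theorem integral_mul_sum {g : Ω → ℝ} (s : Finset ι) (a : ι → ℝ)
    (hint : ∀ i ∈ s, Integrable (fun x => g x * Ψ i x) μ) :
    ∫ x, g x * ∑ i ∈ s, a i * Ψ i x ∂μ = ∑ i ∈ s, a i * ∫ x, g x * Ψ i x ∂μ := by
  simp_rw [Finset.mul_sum, mul_left_comm (g _)]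
  rw [integral_finsetSum s fun i hi => (hint i hi).const_mul (a i)]
  simp_rw [integral_const_mul]

theorem memLp_sum_mul (hΨ : ∀ i, MemLp (Ψ i) 2 μ) (s : Finset ι) (a : ι → ℝ) :
    MemLp (fun x => ∑ i ∈ s, a i * Ψ i x) 2 μ :=
  memLp_finsetSum s fun i _ => (hΨ i).const_mul (a i)

variable [DecidableEq ι] (hΨ : ∀ i, MemLp (Ψ i) 2 μ)
  (horth : ∀ i j, ∫ x, Ψ i x * Ψ j x ∂μ = if i = j then 1 else 0)
include hΨ horth

theorem integral_sum_mul_of_orthonormal {s : Finset ι} (a : ι → ℝ) {i : ι} (hi : i ∈ s) :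
    ∫ x, (∑ j ∈ s, a j * Ψ j x) * Ψ i x ∂μ = a i := by
  simp_rw [mul_comm _ (Ψ i _)]
  rw [integral_mul_sum s a fun j _ => (hΨ i).integrable_mul (hΨ j)]
  simp [horth, hi]

theorem eq_integral_mul_of_sum_smul_eq [Fintype ι] {f : Ω → ℝ} {b : ι → ℝ}
    (hf : ∑ i, b i • Ψ i = f) (m : ι) : b m = ∫ x, f x * Ψ m x ∂μ := by
  subst hf
  simpa using (integral_sum_mul_of_orthonormal hΨ horth b (Finset.mem_univ m)).symm

theorem integral_sum_mul_sq_of_orthonormal (s : Finset ι) (a : ι → ℝ) :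
    ∫ x, (∑ i ∈ s, a i * Ψ i x) ^ 2 ∂μ = ∑ i ∈ s, a i ^ 2 := by
  simp_rw [sq]
  rw [integral_mul_sum s a fun i _ => (memLp_sum_mul hΨ s a).integrable_mul (hΨ i)]
  exact Finset.sum_congr rfl fun i hi => by rw [integral_sum_mul_of_orthonormal hΨ horth a hi]

theorem sqrt_integral_sum_mul_sq_le_sum_abs (s : Finset ι) (a : ι → ℝ) :
    √(∫ x, (∑ i ∈ s, a i * Ψ i x) ^ 2 ∂μ) ≤ ∑ i ∈ s, |a i| := by
  have hsum : 0 ≤ ∑ i ∈ s, |a i| := Finset.sum_nonneg fun i _ => abs_nonneg (a i)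
  rw [integral_sum_mul_sq_of_orthonormal hΨ horth, Real.sqrt_le_left hsum]
  simpa only [sq_abs] using Finset.sum_sq_le_sq_sum_of_nonneg fun i _ => abs_nonneg (a i)

theorem sqrt_integral_sq_projection_le {g : Ω → ℝ} (hg : MemLp g 2 μ) (s : Finset ι) :
    √(∫ x, (∑ i ∈ s, (∫ y, g y * Ψ i y ∂μ) * Ψ i x) ^ 2 ∂μ) ≤ √(∫ x, g x ^ 2 ∂μ) := by
  set a := fun i => ∫ y, g y * Ψ i y ∂μ
  set N := √(∫ x, (∑ i ∈ s, a i * Ψ i x) ^ 2 ∂μ)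
  have key : N * N ≤ √(∫ x, g x ^ 2 ∂μ) * N :=
    calc N * N = ∫ x, (∑ i ∈ s, a i * Ψ i x) ^ 2 ∂μ :=
          Real.mul_self_sqrt (integral_nonneg fun x => sq_nonneg _)
      _ = ∫ x, g x * ∑ i ∈ s, a i * Ψ i x ∂μ := by
          rw [integral_sum_mul_sq_of_orthonormal hΨ horth,
            integral_mul_sum s a fun i _ => hg.integrable_mul (hΨ i)]
          simp only [sq, a]
      _ ≤ √(∫ x, g x ^ 2 ∂μ) * N :=
          (le_abs_self _).trans (abs_integral_mul_le hg (memLp_sum_mul hΨ s a))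
  nlinarith [Real.sqrt_nonneg (∫ x, g x ^ 2 ∂μ), show 0 ≤ N from Real.sqrt_nonneg _]

theorem sqrt_integral_sq_sub_sum_le [Fintype ι] {g : Ω → ℝ} (hg : MemLp g 2 μ) (a b : ι → ℝ) :
    √(∫ x, (g x - ∑ i, b i * Ψ i x) ^ 2 ∂μ)
      ≤ √(∫ x, (g x - ∑ i, a i * Ψ i x) ^ 2 ∂μ) + ∑ i, |a i - b i| := by
  refine (sqrt_integral_sq_sub_le hg (memLp_sum_mul hΨ Finset.univ a)
    (memLp_sum_mul hΨ Finset.univ b)).trans ?_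
  simp only [← Finset.sum_sub_distrib, ← sub_mul]
  exact add_le_add le_rfl (sqrt_integral_sum_mul_sq_le_sum_abs hΨ horth _ _)

end Orthonormal

theorem sum_mul_mul_mem_span {Ω ι κ : Type*} [Fintype ι] {Ψ : ι → Ω → ℝ} {φ : κ → Ω → ℝ}
    {ψ : Ω → ℝ} (s : Finset κ) (a : κ → ℝ)
    (h : ∀ l ∈ s, ∃ b : ι → ℝ, ∀ x, φ l x * ψ x = ∑ m, b m * Ψ m x) :
    (fun x => ∑ l ∈ s, a l * φ l x) * ψ ∈ Submodule.span ℝ (Set.range Ψ) := by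
  have hmem : ∀ l ∈ s, φ l * ψ ∈ Submodule.span ℝ (Set.range Ψ) := fun l hl => by
    obtain ⟨b, hb⟩ := h l hl
    exact (Submodule.mem_span_range_iff_exists_fun ℝ).2 ⟨b, by ext x; simp [hb x]⟩
  have hsum : (fun x => ∑ l ∈ s, a l * φ l x) * ψ = ∑ l ∈ s, a l • (φ l * ψ) := by
    ext x; simp [Finset.sum_mul, mul_assoc]
  exact hsum ▸ Submodule.sum_mem _ fun l hl => Submodule.smul_mem _ (a l) (hmem l hl)

section Functional

variable {Ω ι : Type*} [MeasurableSpace Ω] {μ : Measure Ω} {Ψ : ι → Ω → ℝ}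
  (I : (Ω → ℝ) →ₗ[ℝ] ℝ)

theorem abs_apply_sub_integral_le_of_sum_smul_eq [Fintype ι] (hΨ : ∀ i, Integrable (Ψ i) μ)
    {f : Ω → ℝ} {b : ι → ℝ} {B : ℝ} (hf : ∑ i, b i • Ψ i = f) (hb : ∀ i, |b i| ≤ B) :
    |I f - ∫ x, f x ∂μ| ≤ B * ∑ i, |I (Ψ i) - ∫ x, Ψ i x ∂μ| := by
  subst hf
  have hsplit : I (∑ i, b i • Ψ i) - ∫ x, (∑ i, b i • Ψ i) x ∂μ
      = ∑ i, b i * (I (Ψ i) - ∫ x, Ψ i x ∂μ) := by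
    simp only [map_sum, map_smul, Finset.sum_apply, Pi.smul_apply, smul_eq_mul,
      integral_finsetSum _ fun i _ => (hΨ i).const_mul (b i), integral_const_mul, mul_sub,
      Finset.sum_sub_distrib]
  rw [hsplit, Finset.mul_sum]
  refine (Finset.abs_sum_le_sum_abs _ _).trans (Finset.sum_le_sum fun i _ => ?_)
  rw [abs_mul]
  exact mul_le_mul_of_nonneg_right (hb i) (abs_nonneg _)

theorem abs_apply_mul_sub_integral_le [Fintype ι] [DecidableEq ι] {W L T δ ε : ℝ} (hW0 : 0 ≤ W)
    (hW : ∀ f, Integrable f μ → |I f| ≤ W * ∫ x, |f x| ∂μ)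
    (hΨ : ∀ i, MemLp (Ψ i) 2 μ) (hΨint : ∀ i, Integrable (Ψ i) μ)
    (horth : ∀ i j, ∫ x, Ψ i x * Ψ j x ∂μ = if i = j then 1 else 0)
    {g p ψ : Ω → ℝ} (hg : MemLp g 2 μ) (hp : MemLp p 2 μ) (hψ : MemLp ψ 2 μ)
    (hψ1 : ∫ x, ψ x ^ 2 ∂μ = 1) (hψΨ : ∀ i, MemLp (fun x => ψ x * Ψ i x) 2 μ)
    (hpψ : p * ψ ∈ Submodule.span ℝ (Set.range Ψ))
    (hcoef : ∫ x, p x * ψ x ∂μ = ∫ x, g x * ψ x ∂μ)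
    (hL : √(∫ x, p x ^ 2 ∂μ) ≤ L) (hT0 : 0 ≤ T) (hT : ∀ i, √(∫ x, (ψ x * Ψ i x) ^ 2 ∂μ) ≤ T)
    (hδ : √(∫ x, (g x - p x) ^ 2 ∂μ) ≤ δ) (hε : ∑ i, |I (Ψ i) - ∫ x, Ψ i x ∂μ| ≤ ε) :
    |I (g * ψ) - ∫ x, g x * ψ x ∂μ| ≤ L * T * ε + W * δ := by
  have hL0 : 0 ≤ L := (Real.sqrt_nonneg _).trans hL
  obtain ⟨b, hb⟩ := (Submodule.mem_span_range_iff_exists_fun ℝ).1 hpψ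
  have hbLT : ∀ i, |b i| ≤ L * T := fun i =>
    calc |b i| = |∫ x, p x * (ψ x * Ψ i x) ∂μ| := by
          simp only [eq_integral_mul_of_sum_smul_eq hΨ horth hb i, Pi.mul_apply, mul_assoc]
      _ ≤ √(∫ x, p x ^ 2 ∂μ) * √(∫ x, (ψ x * Ψ i x) ^ 2 ∂μ) := abs_integral_mul_le hp (hψΨ i)
      _ ≤ L * T := mul_le_mul hL (hT i) (Real.sqrt_nonneg _) hL0
  have hproj : |I ((g - p) * ψ)| ≤ W * δ :=
    calc |I ((g - p) * ψ)| ≤ W * ∫ x, |(g x - p x) * ψ x| ∂μ :=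
          hW _ ((hg.sub hp).integrable_mul hψ)
      _ ≤ W * (√(∫ x, (g x - p x) ^ 2 ∂μ) * √(∫ x, ψ x ^ 2 ∂μ)) :=
          mul_le_mul_of_nonneg_left (integral_abs_mul_le (hg.sub hp) hψ) hW0
      _ ≤ W * δ := by rw [hψ1, Real.sqrt_one, mul_one]; exact mul_le_mul_of_nonneg_left hδ hW0
  have hsplit : I (g * ψ) - ∫ x, g x * ψ x ∂μ
      = I ((g - p) * ψ) + (I (p * ψ) - ∫ x, (p * ψ) x ∂μ) := by
    rw [show ∫ x, (p * ψ) x ∂μ = ∫ x, g x * ψ x ∂μ from hcoef, ← add_sub_assoc, ← map_add,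
      sub_mul, sub_add_cancel]
  calc |I (g * ψ) - ∫ x, g x * ψ x ∂μ|
      ≤ |I ((g - p) * ψ)| + |I (p * ψ) - ∫ x, (p * ψ) x ∂μ| := hsplit ▸ abs_add_le _ _
    _ ≤ W * δ + L * T * ε := add_le_add hproj
        ((abs_apply_sub_integral_le_of_sum_smul_eq I hΨint hb hbLT).trans
          (mul_le_mul_of_nonneg_left hε (mul_nonneg hL0 hT0)))
    _ = L * T * ε + W * δ := add_comm _ _

end Functional

def quadrature {Ω κ : Type*} [Fintype κ] (ξ : κ → Ω) (w : κ → ℝ) : (Ω → ℝ) →ₗ[ℝ] ℝ where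
  toFun f := ∑ k, w k * f (ξ k)
  map_add' f g := by simp only [Pi.add_apply, mul_add, Finset.sum_add_distrib]
  map_smul' r f := by
    simp only [Pi.smul_apply, smul_eq_mul, Finset.mul_sum, RingHom.id_apply, mul_left_comm]

theorem stmt_5_general {Ω : Type*} [MeasurableSpace Ω] (μ : Measure Ω) [IsProbabilityMeasure μ]
    (n₁ n₂ : ℕ) (hn : n₁ ≤ n₂)
    (Ψ : Fin n₂ → Ω → ℝ)
    (horth : ∀ i j, ∫ x, Ψ i x * Ψ j x ∂μ = if i = j then (1 : ℝ) else 0)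
    (hΨint : ∀ j, Integrable (Ψ j) μ)
    (hΨprod2 : ∀ i j, Integrable (fun x => (Ψ i x * Ψ j x) ^ 2) μ)
    (y : Ω → ℝ) (L δ ε W T : ℝ)
    (hymeas : AEStronglyMeasurable y μ)
    (hy2 : Integrable (fun x => (y x) ^ 2) μ)
    (hL : Real.sqrt (∫ x, (y x) ^ 2 ∂μ) ≤ L)
    (c : Fin n₂ → ℝ) (hc : ∀ j, c j = ∫ x, y x * Ψ j x ∂μ)
    (yp : Ω → ℝ)
    (hyp : yp = fun x => ∑ j : Fin n₁, c (Fin.castLE hn j) * Ψ (Fin.castLE hn j) x)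
    (hδ : Real.sqrt (∫ x, (y x - yp x) ^ 2 ∂μ) ≤ δ)
    (M : ℕ) (ξ : Fin M → Ω) (w : Fin M → ℝ)
    (hW : ∀ f : Ω → ℝ, Integrable f μ →
      |∑ k, w k * f (ξ k)| ≤ W * ∫ x, |f x| ∂μ)
    (hε : ∑ j : Fin n₂, |(∑ k, w k * Ψ j (ξ k)) - ∫ x, Ψ j x ∂μ| ≤ ε)
    (hT : ∀ j l : Fin n₂, Real.sqrt (∫ x, (Ψ j x * Ψ l x) ^ 2 ∂μ) ≤ T)
    (hspan : ∀ j l : Fin n₁, ∃ a : Fin n₂ → ℝ,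
      ∀ x, Ψ (Fin.castLE hn j) x * Ψ (Fin.castLE hn l) x = ∑ m, a m * Ψ m x)
    (ctil : Fin n₁ → ℝ)
    (hctil : ∀ j, ctil j = ∑ k, w k * (y (ξ k) * Ψ (Fin.castLE hn j) (ξ k)))
    (ytil : Ω → ℝ)
    (hytil : ytil = fun x => ∑ j : Fin n₁, ctil j * Ψ (Fin.castLE hn j) x) :
    Real.sqrt (∫ x, (y x - ytil x) ^ 2 ∂μ) ≤ δ + n₁ * (L * T * ε + W * δ) := by
  set φ : Fin n₁ → Ω → ℝ := fun j => Ψ (Fin.castLE hn j)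
  have hΨ : ∀ j, MemLp (Ψ j) 2 μ := fun j =>
    (memLp_two_iff_integrable_sq (hΨint j).aestronglyMeasurable).2
      (Integrable.of_integral_ne_zero (by simp [sq, horth]))
  have hφorth : ∀ i j, ∫ x, φ i x * φ j x ∂μ = if i = j then 1 else 0 := fun i j => by
    simp only [φ, horth, Fin.castLE_inj]
  have hy : MemLp y 2 μ := (memLp_two_iff_integrable_sq hymeas).2 hy2
  have hypL2 : MemLp yp 2 μ := hyp ▸ memLp_sum_mul (fun j => hΨ _) _ _
  have hW0 : 0 ≤ W := by simpa using (abs_nonneg _).trans (hW (fun _ => 1) (integrable_const 1))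
  have hypL : √(∫ x, yp x ^ 2 ∂μ) ≤ L := by
    have := sqrt_integral_sq_projection_le (fun j => hΨ _) hφorth hy Finset.univ
    simp only [← hc] at this
    exact hyp ▸ this.trans hL
  have hΨΨ : ∀ i j, MemLp (fun x => Ψ i x * Ψ j x) 2 μ := fun i j =>
    (memLp_two_iff_integrable_sq ((hΨint i).aestronglyMeasurable.mul
      (hΨint j).aestronglyMeasurable)).2 (hΨprod2 i j)
  have hypφ_mem : ∀ j, yp * φ j ∈ Submodule.span ℝ (Set.range Ψ) := fun j =>
    hyp ▸ sum_mul_mul_mem_span _ _ fun l _ => hspan l j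
  have hypφ : ∀ j, ∫ x, yp x * φ j x ∂μ = ∫ x, y x * φ j x ∂μ := fun j => by
    rw [hyp]
    exact (integral_sum_mul_of_orthonormal (fun j => hΨ _) hφorth _ (Finset.mem_univ j)).trans
      (hc _)
  have hcoef : ∀ j, |ctil j - c (Fin.castLE hn j)| ≤ L * T * ε + W * δ := fun j => by
    rw [hctil, hc]
    exact abs_apply_mul_sub_integral_le (quadrature ξ w) hW0 hW hΨ hΨint horth hy hypL2 (hΨ _)
      (by simpa [sq] using horth (Fin.castLE hn j) (Fin.castLE hn j)) (hΨΨ _) (hypφ_mem j)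
      (hypφ j) hypL ((Real.sqrt_nonneg _).trans (hT (Fin.castLE hn j) (Fin.castLE hn j))) (hT _)
      hδ hε
  calc √(∫ x, (y x - ytil x) ^ 2 ∂μ)
      ≤ √(∫ x, (y x - yp x) ^ 2 ∂μ) + ∑ j, |c (Fin.castLE hn j) - ctil j| := by
        subst hyp hytil
        exact sqrt_integral_sq_sub_sum_le (fun j => hΨ _) hφorth hy _ _
    _ ≤ δ + n₁ * (L * T * ε + W * δ) := by
        grw [hδ, Finset.sum_le_sum fun j _ => (abs_sub_comm _ _).le.trans (hcoef j)]
        simp only [Finset.sum_const, Finset.card_univ, Fintype.card_fin, nsmul_eq_mul, le_refl]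

/-- Stochastic collocation error bound: under Assumptions 1–3,
`‖y - ỹ‖₂ ≤ δ + N_p (L T ε + W δ)` where `ỹ` has the numerically computed coefficients
and `T` bounds the `L²` norms of products of basis functions. -/
theorem stmt_5 {Ω : Type*} [MeasurableSpace Ω] (μ : Measure Ω) [IsProbabilityMeasure μ]
    (n₁ n₂ : ℕ) (hn : n₁ ≤ n₂)
    (Ψ : Fin n₂ → Ω → ℝ)
    (horth : ∀ i j, ∫ x, Ψ i x * Ψ j x ∂μ = if i = j then (1 : ℝ) else 0)
    (hΨint : ∀ j, Integrable (Ψ j) μ)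
    (hΨprod2 : ∀ i j, Integrable (fun x => (Ψ i x * Ψ j x) ^ 2) μ)
    (y : Ω → ℝ) (L δ ε W T : ℝ)
    (hymeas : AEStronglyMeasurable y μ)
    (hy2 : Integrable (fun x => (y x) ^ 2) μ)
    (hyΨ : ∀ j, Integrable (fun x => y x * Ψ j x) μ)
    (hL : Real.sqrt (∫ x, (y x) ^ 2 ∂μ) ≤ L)
    (c : Fin n₂ → ℝ) (hc : ∀ j, c j = ∫ x, y x * Ψ j x ∂μ)
    (yp : Ω → ℝ)
    (hyp : yp = fun x => ∑ j : Fin n₁, c (Fin.castLE hn j) * Ψ (Fin.castLE hn j) x)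
    (hδ : Real.sqrt (∫ x, (y x - yp x) ^ 2 ∂μ) ≤ δ)
    (hdiff2 : Integrable (fun x => (y x - yp x) ^ 2) μ)
    (M : ℕ) (ξ : Fin M → Ω) (w : Fin M → ℝ)
    (hW : ∀ f : Ω → ℝ, Integrable f μ →
      |∑ k, w k * f (ξ k)| ≤ W * ∫ x, |f x| ∂μ)
    (hε : ∑ j : Fin n₂, |(∑ k, w k * Ψ j (ξ k)) - ∫ x, Ψ j x ∂μ| ≤ ε)
    (hT : ∀ j l : Fin n₂, Real.sqrt (∫ x, (Ψ j x * Ψ l x) ^ 2 ∂μ) ≤ T)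
    (hspan : ∀ j l : Fin n₁, ∃ a : Fin n₂ → ℝ,
      ∀ x, Ψ (Fin.castLE hn j) x * Ψ (Fin.castLE hn l) x = ∑ m, a m * Ψ m x)
    (ctil : Fin n₁ → ℝ)
    (hctil : ∀ j, ctil j = ∑ k, w k * (y (ξ k) * Ψ (Fin.castLE hn j) (ξ k)))
    (ytil : Ω → ℝ)
    (hytil : ytil = fun x => ∑ j : Fin n₁, ctil j * Ψ (Fin.castLE hn j) x) :
    Real.sqrt (∫ x, (y x - ytil x) ^ 2 ∂μ) ≤ δ + n₁ * (L * T * ε + W * δ) :=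
  stmt_5_general μ n₁ n₂ hn Ψ horth hΨint hΨprod2 y L δ ε W T hymeas hy2 hL c hc yp hyp hδ M ξ w hW
    hε hT hspan ctil hctil ytil hytil
end

section
/- Under Assumptions 1-3, the discrete Gram matrix $V \in \mathbb{R}^{N_p \times N_p}$ with entries $V_{ij} = \mathbb{I}[\Psi_i \Psi_j] = \sum_{k=1}^M \Psi_i(\xi_k)\Psi_j(\xi_k)w_k$ satisfies $\|V - I_{N_p}\|_F \le N_p T \epsilon$, where $T = \max_{j,l \le N_{2p}} \|\Psi_j\Psi_l\|_2$. -/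
open MeasureTheory

/-- The discrete Gram matrix `V` with `V i j = 𝕀[Ψ_i Ψ_j]` satisfies
`‖V - I‖_F ≤ N_p T ε`. -/
theorem stmt_6 {Ω : Type*} [MeasurableSpace Ω] (μ : Measure Ω) [IsProbabilityMeasure μ]
    (n₁ n₂ : ℕ) (hn : n₁ ≤ n₂)
    (Ψ : Fin n₂ → Ω → ℝ)
    (horth : ∀ i j, ∫ x, Ψ i x * Ψ j x ∂μ = if i = j then (1 : ℝ) else 0)
    (hΨint : ∀ j, Integrable (Ψ j) μ)
    (hΨprod2 : ∀ i j, Integrable (fun x => (Ψ i x * Ψ j x) ^ 2) μ)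
    (M : ℕ) (ξ : Fin M → Ω) (w : Fin M → ℝ) (ε T : ℝ)
    (hε : ∑ j : Fin n₂, |(∑ k, w k * Ψ j (ξ k)) - ∫ x, Ψ j x ∂μ| ≤ ε)
    (hT : ∀ j l : Fin n₂, Real.sqrt (∫ x, (Ψ j x * Ψ l x) ^ 2 ∂μ) ≤ T)
    (hspan : ∀ j l : Fin n₁, ∃ a : Fin n₂ → ℝ,
      ∀ x, Ψ (Fin.castLE hn j) x * Ψ (Fin.castLE hn l) x = ∑ m, a m * Ψ m x)
    (V : Fin n₁ → Fin n₁ → ℝ)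
    (hV : ∀ i j, V i j = ∑ k, w k * (Ψ (Fin.castLE hn i) (ξ k) * Ψ (Fin.castLE hn j) (ξ k))) :
    Real.sqrt (∑ i : Fin n₁, ∑ j : Fin n₁,
      (V i j - if i = j then 1 else 0) ^ 2) ≤ n₁ * T * ε := by
  rcases Nat.eq_zero_or_pos n₁ with h0 | hpos
  · subst h0
    simp
  have hn₂ : 0 < n₂ := lt_of_lt_of_le hpos hn
  have hε0 : 0 ≤ ε := le_trans (Finset.sum_nonneg fun _ _ => abs_nonneg _) hε
  have hT0 : 0 ≤ T := le_trans (Real.sqrt_nonneg _) (hT ⟨0, hn₂⟩ ⟨0, hn₂⟩)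
  have hmeas : ∀ j, AEStronglyMeasurable (Ψ j) μ := fun j => (hΨint j).aestronglyMeasurable
  have hint2 : ∀ i j, Integrable (fun x => Ψ i x * Ψ j x) μ := by
    intro i j
    refine Integrable.mono' (g := fun x => (1 + (Ψ i x * Ψ j x) ^ 2) / 2)
      (((integrable_const (1:ℝ)).add (hΨprod2 i j)).div_const 2)
      ((hmeas i).mul (hmeas j)) ?_
    filter_upwards with x
    rw [Real.norm_eq_abs]
    nlinarith [sq_nonneg (|Ψ i x * Ψ j x| - 1), sq_abs (Ψ i x * Ψ j x)]
  have key : ∀ i j : Fin n₁, |V i j - if i = j then (1:ℝ) else 0| ≤ T * ε := by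
    intro i j
    obtain ⟨a, ha⟩ := hspan i j
    set i' := Fin.castLE hn i with hi'
    set j' := Fin.castLE hn j with hj'
    have hδ : (if i = j then (1:ℝ) else 0) = ∫ x, Ψ i' x * Ψ j' x ∂μ := by
      rw [horth]
      congr 1
      simp [hi', hj', Fin.ext_iff]
    have hint_sum : ∫ x, Ψ i' x * Ψ j' x ∂μ = ∑ m, a m * ∫ x, Ψ m x ∂μ := by
      calc ∫ x, Ψ i' x * Ψ j' x ∂μ = ∫ x, ∑ m, a m * Ψ m x ∂μ := by
            congr 1; funext x; exact ha x
        _ = ∑ m, ∫ x, a m * Ψ m x ∂μ :=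
            integral_finset_sum _ (fun m _ => (hΨint m).const_mul _)
        _ = ∑ m, a m * ∫ x, Ψ m x ∂μ := by simp [integral_const_mul]
    have hVsum : V i j = ∑ m, a m * ∑ k, w k * Ψ m (ξ k) := by
      rw [hV]
      calc ∑ k, w k * (Ψ i' (ξ k) * Ψ j' (ξ k))
          = ∑ k, ∑ m, a m * (w k * Ψ m (ξ k)) := by
            refine Finset.sum_congr rfl fun k _ => ?_
            rw [ha (ξ k), Finset.mul_sum]
            exact Finset.sum_congr rfl fun m _ => by ring
        _ = ∑ m, a m * ∑ k, w k * Ψ m (ξ k) := by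
            rw [Finset.sum_comm]
            simp [Finset.mul_sum]
    have hnorm : ∑ m, (a m) ^ 2 = ∫ x, (Ψ i' x * Ψ j' x) ^ 2 ∂μ := by
      have hx : ∀ x, (Ψ i' x * Ψ j' x) ^ 2 = ∑ m, ∑ l, (a m * a l) * (Ψ m x * Ψ l x) := by
        intro x
        rw [sq, ha x, Finset.sum_mul_sum]
        exact Finset.sum_congr rfl fun m _ => Finset.sum_congr rfl fun l _ => by ring
      calc ∑ m, (a m) ^ 2
          = ∑ m, ∑ l, (a m * a l) * ∫ x, Ψ m x * Ψ l x ∂μ := by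
            simp [horth, mul_ite, mul_one, mul_zero, Finset.sum_ite_eq', sq]
        _ = ∑ m, ∫ x, ∑ l, (a m * a l) * (Ψ m x * Ψ l x) ∂μ := by
            refine Finset.sum_congr rfl fun m _ => ?_
            rw [integral_finset_sum _ (fun l _ => (hint2 m l).const_mul _)]
            simp [integral_const_mul]
        _ = ∫ x, ∑ m, ∑ l, (a m * a l) * (Ψ m x * Ψ l x) ∂μ := by
            rw [integral_finset_sum _ (fun m _ =>
              integrable_finset_sum _ (fun l _ => (hint2 m l).const_mul _))]
        _ = ∫ x, (Ψ i' x * Ψ j' x) ^ 2 ∂μ := by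
            congr 1; funext x; exact (hx x).symm
    have ha_bound : ∀ m, |a m| ≤ T := by
      intro m
      have h1 : (a m) ^ 2 ≤ ∑ l, (a l) ^ 2 :=
        Finset.single_le_sum (f := fun l => (a l) ^ 2) (fun l _ => sq_nonneg _)
          (Finset.mem_univ m)
      have : |a m| ≤ Real.sqrt (∑ l, (a l) ^ 2) := by
        rw [← Real.sqrt_sq_eq_abs]
        exact Real.sqrt_le_sqrt h1
      refine this.trans ?_
      rw [hnorm]
      exact hT i' j'
    calc |V i j - if i = j then (1:ℝ) else 0|
        = |∑ m, a m * ((∑ k, w k * Ψ m (ξ k)) - ∫ x, Ψ m x ∂μ)| := by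
          rw [hVsum, hδ, hint_sum, ← Finset.sum_sub_distrib]
          congr 1
          exact Finset.sum_congr rfl fun m _ => by ring
      _ ≤ ∑ m, |a m * ((∑ k, w k * Ψ m (ξ k)) - ∫ x, Ψ m x ∂μ)| :=
          Finset.abs_sum_le_sum_abs _ _
      _ ≤ ∑ m, T * |(∑ k, w k * Ψ m (ξ k)) - ∫ x, Ψ m x ∂μ| := by
          refine Finset.sum_le_sum fun m _ => ?_
          rw [abs_mul]
          exact mul_le_mul_of_nonneg_right (ha_bound m) (abs_nonneg _)
      _ = T * ∑ m, |(∑ k, w k * Ψ m (ξ k)) - ∫ x, Ψ m x ∂μ| := by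
          rw [Finset.mul_sum]
      _ ≤ T * ε := mul_le_mul_of_nonneg_left hε hT0
  have hsum : ∑ i : Fin n₁, ∑ j : Fin n₁, (V i j - if i = j then (1:ℝ) else 0) ^ 2
      ≤ (n₁ * T * ε) ^ 2 := by
    have hbd : ∀ i j : Fin n₁, (V i j - if i = j then (1:ℝ) else 0) ^ 2 ≤ (T * ε) ^ 2 := by
      intro i j
      have := key i j
      nlinarith [abs_nonneg (V i j - if i = j then (1:ℝ) else 0),
        sq_abs (V i j - if i = j then (1:ℝ) else 0)]
    calc ∑ i : Fin n₁, ∑ j : Fin n₁, (V i j - if i = j then (1:ℝ) else 0) ^ 2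
        ≤ ∑ _i : Fin n₁, ∑ _j : Fin n₁, (T * ε) ^ 2 :=
          Finset.sum_le_sum fun i _ => Finset.sum_le_sum fun j _ => hbd i j
      _ = (n₁ * T * ε) ^ 2 := by
          simp [Finset.sum_const]
          ring
  calc Real.sqrt (∑ i : Fin n₁, ∑ j : Fin n₁, (V i j - if i = j then (1:ℝ) else 0) ^ 2)
      ≤ Real.sqrt ((n₁ * T * ε) ^ 2) := Real.sqrt_le_sqrt hsum
    _ = n₁ * T * ε := Real.sqrt_sq (by positivity)
end

section
/- Each entry of the discrete Gram matrix deviates from the exact Gram matrix by at most $T\epsilon$: for all $i,j \le N_p$, $|\mathbb{E}[\Psi_i\Psi_j] - \mathbb{I}[\Psi_i\Psi_j]| \le T\epsilon$. -/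
open MeasureTheory

/-- Entrywise Gram-matrix error: if `Ψ_i Ψ_j = ∑ a_l Ψ_l` with `‖a‖₂ ≤ T` and the
quadrature residual vector has `ℓ²` norm at most `ε`, then
`|E[Ψ_i Ψ_j] - 𝕀[Ψ_i Ψ_j]| ≤ T ε`. -/
theorem stmt_7 {Ω : Type*} [MeasurableSpace Ω] (μ : Measure Ω) [IsProbabilityMeasure μ]
    (n₁ n₂ : ℕ) (hn : n₁ ≤ n₂)
    (Ψ : Fin n₂ → Ω → ℝ)
    (horth : ∀ i j, ∫ x, Ψ i x * Ψ j x ∂μ = if i = j then (1 : ℝ) else 0)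
    (hΨint : ∀ j, Integrable (Ψ j) μ)
    (M : ℕ) (ξ : Fin M → Ω) (w : Fin M → ℝ) (ε T : ℝ)
    (hε : Real.sqrt (∑ l : Fin n₂, ((∑ k, w k * Ψ l (ξ k)) - ∫ x, Ψ l x ∂μ) ^ 2) ≤ ε)
    (i j : Fin n₁) (a : Fin n₂ → ℝ)
    (ha : ∀ x, Ψ (Fin.castLE hn i) x * Ψ (Fin.castLE hn j) x = ∑ l, a l * Ψ l x)
    (haT : Real.sqrt (∑ l, (a l) ^ 2) ≤ T) :
    |(∫ x, Ψ (Fin.castLE hn i) x * Ψ (Fin.castLE hn j) x ∂μ) -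
      ∑ k, w k * (Ψ (Fin.castLE hn i) (ξ k) * Ψ (Fin.castLE hn j) (ξ k))| ≤ T * ε := by
  set r : Fin n₂ → ℝ := fun l => (∫ x, Ψ l x ∂μ) - ∑ k, w k * Ψ l (ξ k) with hr
  have h1 : (∫ x, Ψ (Fin.castLE hn i) x * Ψ (Fin.castLE hn j) x ∂μ)
      = ∑ l, a l * ∫ x, Ψ l x ∂μ := by
    rw [MeasureTheory.integral_congr_ae (Filter.Eventually.of_forall ha),
      MeasureTheory.integral_finset_sum]
    · simp [MeasureTheory.integral_const_mul]
    · exact fun l _ => (hΨint l).const_mul _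
  have h2 : (∑ k, w k * (Ψ (Fin.castLE hn i) (ξ k) * Ψ (Fin.castLE hn j) (ξ k)))
      = ∑ l, a l * ∑ k, w k * Ψ l (ξ k) := by
    simp_rw [ha, Finset.mul_sum]
    rw [Finset.sum_comm]
    exact Finset.sum_congr rfl fun l _ => Finset.sum_congr rfl fun k _ => by ring
  have key : (∫ x, Ψ (Fin.castLE hn i) x * Ψ (Fin.castLE hn j) x ∂μ) -
      ∑ k, w k * (Ψ (Fin.castLE hn i) (ξ k) * Ψ (Fin.castLE hn j) (ξ k))
      = ∑ l, a l * r l := by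
    rw [h1, h2, ← Finset.sum_sub_distrib]
    congr 1; ext l; rw [hr]; ring
  rw [key]
  have cs : (∑ l, a l * r l) ^ 2 ≤ (∑ l, (a l) ^ 2) * (∑ l, (r l) ^ 2) :=
    Finset.sum_mul_sq_le_sq_mul_sq Finset.univ a r
  have habs : |∑ l, a l * r l| ≤ Real.sqrt (∑ l, (a l) ^ 2) * Real.sqrt (∑ l, (r l) ^ 2) := by
    rw [← Real.sqrt_sq_eq_abs, ← Real.sqrt_mul (by positivity)]
    exact Real.sqrt_le_sqrt cs
  have hre : (∑ l : Fin n₂, (r l) ^ 2)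
      = ∑ l : Fin n₂, ((∑ k, w k * Ψ l (ξ k)) - ∫ x, Ψ l x ∂μ) ^ 2 := by
    congr 1; ext l; rw [hr]; ring
  refine habs.trans ?_
  have h0a : (0:ℝ) ≤ Real.sqrt (∑ l, (a l) ^ 2) := Real.sqrt_nonneg _
  have h0r : (0:ℝ) ≤ Real.sqrt (∑ l, (r l) ^ 2) := Real.sqrt_nonneg _
  exact mul_le_mul haT (hre ▸ hε) h0r (le_trans h0a haT)
end
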